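/- Let (L, ∘_λ, [·_λ ·]) be a transposed Poisson conformal superalgebra. Then for all homogeneous u, v, x, y ∈ L the following identity holds: (−1)^{|v||x|} x ∘_{μ−λ} [u_λ (v ∘_γ y)] + (−1)^{|u||v|} [(v ∘_γ x)_{γ+μ−λ} u] ∘_{γ+μ} y − (−1)^{|u||x|} (u ∘_λ v) ∘_{λ+γ} [x_{μ−λ} y] = 0. -/

import Mathlib

open Polynomial
open scoped TensorProduct

noncomputable section

namespace TPCSAFormal

/-- The super-sign `(-1)^{i·j}` for parities `i, j ∈ ℤ/2ℤ`. -/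
def sgn (i j : ZMod 2) : ℂ := (-1 : ℂ) ^ (i.val * j.val)

variable (L : Type*) [AddCommGroup L] [Module ℂ L]
  [Module (Polynomial ℂ) L] [IsScalarTower ℂ (Polynomial ℂ) L]

/-- A conformal `λ`-product on the `ℂ[∂]`-module `L`, recorded by its family of `n`-th
product coefficients: `a ∘_λ b = ∑_n λ^n • coeff n a b`, with finitely many nonzero terms.
This is exactly the data of a `ℂ`-bilinear map `L ⊗ L → ℂ[λ] ⊗ L`. -/
structure ConformalProduct where
  coeff : ℕ → L →ₗ[ℂ] L →ₗ[ℂ] L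
  coeff_finite : ∀ a b : L, ∃ N : ℕ, ∀ n : ℕ, N ≤ n → coeff n a b = 0

variable {L}

/-- The value `a ∘_λ b` of the `λ`-product at `λ ∈ ℂ`.  Since `ℂ` is infinite, identities
between such values for all `λ` are equivalent to the corresponding polynomial identities. -/
def ConformalProduct.mul (m : ConformalProduct L) (lam : ℂ) (a b : L) : L :=
  ∑ᶠ n : ℕ, lam ^ n • m.coeff n a b

/-- The value `a ∘_{-∂-λ} b`, where `∂` acts on `L` as scalar multiplication by
`X ∈ ℂ[∂]` (the variable `λ` being replaced by the operator `-∂-λ`). -/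
def ConformalProduct.cmul (m : ConformalProduct L) (lam : ℂ) (a b : L) : L :=
  ∑ᶠ n : ℕ, ((-((X : Polynomial ℂ) + C lam)) ^ n) • m.coeff n a b

variable (L) in
/-- A `ℤ₂`-grading on `L` making it a `ℤ₂`-graded `ℂ[∂]`-module: `L = L₀ ⊕ L₁` with
`∂ L_i ⊆ L_i`, where `∂` acts as multiplication by `X ∈ ℂ[∂]`. -/
structure SuperModule where
  grade : ZMod 2 → Submodule ℂ L
  isInternal : DirectSum.IsInternal grade
  X_smul_mem : ∀ (i : ZMod 2) (a : L), a ∈ grade i → (X : Polynomial ℂ) • a ∈ grade i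

/-- `m` is an even `λ`-product on the `ℤ₂`-graded `ℂ[∂]`-module `(L, S)`:
it is even with respect to the grading and conformally sesquilinear. -/
structure IsLambdaProduct (S : SuperModule L) (m : ConformalProduct L) : Prop where
  even : ∀ (i j : ZMod 2) (a b : L), a ∈ S.grade i → b ∈ S.grade j →
    ∀ n : ℕ, m.coeff n a b ∈ S.grade (i + j)
  sesq_left : ∀ (lam : ℂ) (a b : L),
    m.mul lam ((X : Polynomial ℂ) • a) b = (-lam) • m.mul lam a b
  sesq_right : ∀ (lam : ℂ) (a b : L),
    m.mul lam a ((X : Polynomial ℂ) • b) =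
      (X : Polynomial ℂ) • m.mul lam a b + lam • m.mul lam a b

/-- `(L, S, m)` is a commutative associative conformal superalgebra. -/
structure IsCommAssoc (S : SuperModule L) (m : ConformalProduct L)
    extends IsLambdaProduct S m : Prop where
  comm : ∀ (i j : ZMod 2) (a b : L), a ∈ S.grade i → b ∈ S.grade j →
    ∀ lam : ℂ, m.mul lam a b = sgn i j • m.cmul lam b a
  assoc : ∀ (lam mu : ℂ) (a b c : L),
    m.mul lam a (m.mul mu b c) = m.mul (lam + mu) (m.mul lam a b) c

/-- `(L, S, br)` is a Lie conformal superalgebra. -/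
structure IsLie (S : SuperModule L) (br : ConformalProduct L)
    extends IsLambdaProduct S br : Prop where
  skew : ∀ (i j : ZMod 2) (a b : L), a ∈ S.grade i → b ∈ S.grade j →
    ∀ lam : ℂ, br.mul lam a b = -(sgn i j • br.cmul lam b a)
  jacobi : ∀ (i j : ZMod 2) (a b : L), a ∈ S.grade i → b ∈ S.grade j →
    ∀ (c : L) (lam mu : ℂ),
      br.mul lam a (br.mul mu b c) =
        br.mul (lam + mu) (br.mul lam a b) c + sgn i j • br.mul mu b (br.mul lam a c)

/-- `(L, S, m, br)` is a transposed Poisson conformal superalgebra. -/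
structure IsTPCSA (S : SuperModule L) (m br : ConformalProduct L) : Prop where
  commAssoc : IsCommAssoc S m
  lie : IsLie S br
  transposedLeibniz : ∀ (i j : ZMod 2) (a b : L), a ∈ S.grade i → b ∈ S.grade j →
    ∀ (c : L) (lam mu : ℂ),
      (2 : ℂ) • m.mul lam a (br.mul mu b c) =
        br.mul (lam + mu) (m.mul lam a b) c + sgn i j • br.mul mu b (m.mul lam a c)

/-- `(L, S, m, br)` is a Poisson conformal superalgebra. -/
structure IsPCSA (S : SuperModule L) (m br : ConformalProduct L) : Prop where
  commAssoc : IsCommAssoc S m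
  lie : IsLie S br
  leibniz : ∀ (i j : ZMod 2) (a b : L), a ∈ S.grade i → b ∈ S.grade j →
    ∀ (c : L) (lam mu : ℂ),
      br.mul lam a (m.mul mu b c) =
        m.mul (lam + mu) (br.mul lam a b) c + sgn i j • m.mul mu b (br.mul lam a c)

/-- `(L, S, br, α)` is a Hom-Lie conformal superalgebra. -/
structure IsHomLie (S : SuperModule L) (br : ConformalProduct L) (α : L → L)
    extends IsLambdaProduct S br : Prop where
  map_smul_add : ∀ (c : ℂ) (a b : L), α (c • a + b) = c • α a + α b
  map_grade : ∀ (i : ZMod 2) (a : L), a ∈ S.grade i → α a ∈ S.grade i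
  commute_partial : ∀ a : L, α ((X : Polynomial ℂ) • a) = (X : Polynomial ℂ) • α a
  skew : ∀ (i j : ZMod 2) (a b : L), a ∈ S.grade i → b ∈ S.grade j →
    ∀ lam : ℂ, br.mul lam a b = -(sgn i j • br.cmul lam b a)
  homJacobi : ∀ (i j : ZMod 2) (a b : L), a ∈ S.grade i → b ∈ S.grade j →
    ∀ (c : L) (lam mu : ℂ),
      br.mul lam (α a) (br.mul mu b c) =
        br.mul (lam + mu) (br.mul lam a b) (α c) + sgn i j • br.mul mu (α b) (br.mul lam a c)

/-- `(L, S, p)` is a left-symmetric conformal superalgebra. -/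
structure IsLeftSymmetric (S : SuperModule L) (p : ConformalProduct L)
    extends IsLambdaProduct S p : Prop where
  leftSym : ∀ (i j : ZMod 2) (a b : L), a ∈ S.grade i → b ∈ S.grade j →
    ∀ (c : L) (lam mu : ℂ),
      p.mul (lam + mu) (p.mul lam a b) c - p.mul lam a (p.mul mu b c) =
        sgn i j • (p.mul (lam + mu) (p.mul mu b a) c - p.mul mu b (p.mul lam a c))

/-- `(L, S, p)` is a (left) Novikov conformal superalgebra. -/
structure IsNovikov (S : SuperModule L) (p : ConformalProduct L)
    extends IsLeftSymmetric S p : Prop where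
  novikov : ∀ (j k : ZMod 2) (b c : L), b ∈ S.grade j → c ∈ S.grade k →
    ∀ (a : L) (lam mu : ℂ),
      p.mul (lam + mu) (p.mul lam a b) c = sgn j k • p.cmul mu (p.mul lam a c) b

/-- `(L, S, mc, p)` is a Novikov-Poisson conformal superalgebra. -/
structure IsNovikovPoisson (S : SuperModule L) (mc p : ConformalProduct L) : Prop where
  commAssoc : IsCommAssoc S mc
  novikov : IsNovikov S p
  compat₁ : ∀ (lam mu : ℂ) (a b c : L),
    p.mul (lam + mu) (mc.mul lam a b) c = mc.mul lam a (p.mul mu b c)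
  compat₂ : ∀ (i j : ZMod 2) (a b : L), a ∈ S.grade i → b ∈ S.grade j →
    ∀ (c : L) (lam mu : ℂ),
      mc.mul (lam + mu) (p.mul lam a b) c - p.mul lam a (mc.mul mu b c) =
        sgn i j • (mc.mul (lam + mu) (p.mul mu b a) c - p.mul mu b (mc.mul lam a c))

/-- `(L, S, mc, p)` is a pre-Lie commutative conformal superalgebra. -/
structure IsPreLieComm (S : SuperModule L) (mc p : ConformalProduct L) : Prop where
  commAssoc : IsCommAssoc S mc
  leftSymmetric : IsLeftSymmetric S p
  compat : ∀ (i j : ZMod 2) (a b : L), a ∈ S.grade i → b ∈ S.grade j →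
    ∀ (c : L) (lam mu : ℂ),
      p.mul lam a (mc.mul mu b c) =
        mc.mul (lam + mu) (p.mul lam a b) c + sgn i j • mc.mul mu b (p.mul lam a c)

/-- `(L, S, mc, p)` is a pre-Lie Poisson conformal superalgebra. -/
structure IsPreLiePoisson (S : SuperModule L) (mc p : ConformalProduct L) : Prop where
  commAssoc : IsCommAssoc S mc
  leftSymmetric : IsLeftSymmetric S p
  compat₁ : ∀ (lam mu : ℂ) (a b c : L),
    p.mul (lam + mu) (mc.mul lam a b) c = mc.mul lam a (p.mul mu b c)
  compat₂ : ∀ (i j : ZMod 2) (a b : L), a ∈ S.grade i → b ∈ S.grade j →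
    ∀ (c : L) (lam mu : ℂ),
      mc.mul (lam + mu) (p.mul lam a b) c - p.mul lam a (mc.mul mu b c) =
        sgn i j • (mc.mul (lam + mu) (p.mul mu b a) c - p.mul mu b (mc.mul lam a c))

/-!
Forgetting λ's and signs, the identity reads `x[u,vy] + [vx,u]y = (uv)[x,y]`. The transposed
Leibniz rule `2a[b,c] = [ab,c] + [b,ac]` and skew-symmetry give `[a,b]c = b[a,c] - a[b,c]`.
Applied to `[vx,u]y`, `[x,u](vy)` and `[x,u]y`, together with `2v[x,y] = [vx,y] + [x,vy]`, it
turns the left-hand side into `2uv[x,y] - uv[x,y]`.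

In the conformal setting, commuting `c` past `[a_λ b]` in `[a_λ b] ∘_{λ+μ} c` requires the
transposed Leibniz rule at the point `-∂-λ-μ` rather than at a complex number. Both sides of that
rule are polynomials in `λ` with coefficients in `L`, and such an identity, valid for every
`λ ∈ ℂ`, persists when `λ` is replaced by any `q ∈ ℂ[∂]`.
-/

theorem eq_zero_of_forall_sum_pow_smul_eq_zero {K V : Type*} [Field K] [Infinite K]
    [AddCommGroup V] [Module K V] {N : ℕ} {w : ℕ → V}
    (h : ∀ t : K, ∑ k ∈ Finset.range N, t ^ k • w k = 0) {k : ℕ} (hk : k < N) : w k = 0 := by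
  refine (Module.forall_dual_apply_eq_zero_iff K (w k)).1 fun φ => ?_
  have hp : (∑ k ∈ Finset.range N, C (φ (w k)) * X ^ k : K[X]) = 0 :=
    Polynomial.funext fun t => by
      have ht := congrArg φ (h t)
      simp only [map_sum, map_smul, smul_eq_mul, map_zero] at ht
      simp only [eval_finsetSum, eval_mul, eval_C, eval_pow, eval_X, eval_zero, ← ht]
      exact Finset.sum_congr rfl fun k _ => mul_comm _ _
  simpa [finsetSum_coeff, coeff_C_mul, coeff_X_pow, hk] using congrArg (coeff · k) hp

section PolyMaps

variable (L : Type*) [AddCommGroup L] [Module ℂ L] [Module ℂ[X] L] [IsScalarTower ℂ ℂ[X] L]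

/-- Maps `ℂ[∂] → L` that are polynomial in the argument, with coefficients involving `∂`. -/
def polyMaps : Submodule ℂ (ℂ[X] → L) where
  carrier := {Φ | ∃ (n : ℕ) (P : Fin n → ℂ[X][X]) (u : Fin n → L),
    ∀ q, Φ q = ∑ i, (P i).eval q • u i}
  zero_mem' := ⟨0, Fin.elim0, Fin.elim0, fun _ => by simp⟩
  add_mem' := by
    rintro Φ Ψ ⟨n, P, u, hΦ⟩ ⟨n', P', u', hΨ⟩
    exact ⟨n + n', Fin.append P P', Fin.append u u', fun q => by
      simp [Fin.sum_univ_add, hΦ, hΨ]⟩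
  smul_mem' := by
    rintro c Φ ⟨n, P, u, hΦ⟩
    exact ⟨n, P, fun i => c • u i, fun q => by simp [hΦ, Finset.smul_sum, smul_comm c]⟩

variable {L}

theorem C_smul_eq (c : ℂ) (z : L) : (C c : ℂ[X]) • z = c • z := by
  rw [← Polynomial.algebraMap_eq, algebraMap_smul]

theorem eval_smul_mem_polyMaps (P : ℂ[X][X]) (u : L) : (fun q => P.eval q • u) ∈ polyMaps L :=
  ⟨1, fun _ => P, fun _ => u, fun q => by simp⟩

theorem eval_smul_mem_polyMaps_of_mem (P : ℂ[X][X]) {Φ : ℂ[X] → L} (hΦ : Φ ∈ polyMaps L) :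
    (fun q => P.eval q • Φ q) ∈ polyMaps L := by
  obtain ⟨n, Q, u, hΦ⟩ := hΦ
  exact ⟨n, fun i => P * Q i, u, fun q => by simp [hΦ, Finset.smul_sum, mul_smul]⟩

theorem sum_mem_polyMaps {ι : Type*} (s : Finset ι) {Φ : ι → ℂ[X] → L}
    (h : ∀ i ∈ s, Φ i ∈ polyMaps L) : (fun q => ∑ i ∈ s, Φ i q) ∈ polyMaps L := by
  simpa [Finset.sum_fn] using Submodule.sum_mem _ h

theorem eq_zero_of_mem_polyMaps {Φ : ℂ[X] → L} (hΦ : Φ ∈ polyMaps L)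
    (h : ∀ t : ℂ, Φ (C t) = 0) : Φ = 0 := by
  obtain ⟨n, P, u, hΦ⟩ := hΦ
  set N := (Finset.univ.sup fun i => (P i).natDegree) + 1
  set w : ℕ → L := fun k => ∑ i, (P i).coeff k • u i
  have hΦw : ∀ q, Φ q = ∑ k ∈ Finset.range N, q ^ k • w k := fun q => by
    simp only [hΦ, w, Finset.smul_sum, smul_smul]
    rw [Finset.sum_comm]
    refine Finset.sum_congr rfl fun i _ => ?_
    rw [eval_eq_sum_range' ((Finset.le_sup (f := fun i => (P i).natDegree)
      (Finset.mem_univ i)).trans_lt (Nat.lt_add_one _)), Finset.sum_smul]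
    exact Finset.sum_congr rfl fun k _ => by rw [mul_comm]
  have hw : ∀ k < N, w k = 0 := fun k hk =>
    eq_zero_of_forall_sum_pow_smul_eq_zero (fun t => by
      simpa only [hΦw, ← C_pow, C_smul_eq] using h t) hk
  funext q
  rw [hΦw, Pi.zero_apply]
  exact Finset.sum_eq_zero fun k hk => by rw [hw k (Finset.mem_range.1 hk), smul_zero]

theorem eq_of_mem_polyMaps {Φ Ψ : ℂ[X] → L} (hΦ : Φ ∈ polyMaps L)
    (hΨ : Ψ ∈ polyMaps L) (h : ∀ t : ℂ, Φ (C t) = Ψ (C t)) : Φ = Ψ :=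
  sub_eq_zero.1 <| eq_zero_of_mem_polyMaps (sub_mem hΦ hΨ) fun t => sub_eq_zero.2 (h t)

end PolyMaps

namespace ConformalProduct

theorem hasFiniteSupport_smul_coeff {L : Type*} [AddCommGroup L] [Module ℂ L] [Module ℂ[X] L]
    (m : ConformalProduct L) (q : ℂ[X]) (a b : L) :
    Function.HasFiniteSupport fun n => q ^ n • m.coeff n a b := by
  obtain ⟨N, hN⟩ := m.coeff_finite a b
  refine (Set.finite_Iio N).subset fun n hn => ?_
  by_contra hnN
  exact hn (by simp only [hN n (not_lt.1 hnN), smul_zero])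

variable {L : Type*} [AddCommGroup L] [Module ℂ L] [Module ℂ[X] L] [IsScalarTower ℂ ℂ[X] L]

/-- `a ∘_q b` for an operator `q ∈ ℂ[∂]` in place of `λ`, the `∂` acting on the value. -/
def mulAt (m : ConformalProduct L) (q : ℂ[X]) : L →ₗ[ℂ] L →ₗ[ℂ] L :=
  LinearMap.mk₂ ℂ (fun a b => ∑ᶠ n, q ^ n • m.coeff n a b)
    (fun a a' b => by
      simp only [map_add, LinearMap.add_apply, smul_add]
      exact finsum_add_distrib (m.hasFiniteSupport_smul_coeff q a b)
        (m.hasFiniteSupport_smul_coeff q a' b))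
    (fun c a b => by simp only [map_smul, LinearMap.smul_apply, smul_comm _ c, smul_finsum])
    (fun a b b' => by
      simp only [map_add, smul_add]
      exact finsum_add_distrib (m.hasFiniteSupport_smul_coeff q a b)
        (m.hasFiniteSupport_smul_coeff q a b'))
    (fun c a b => by simp only [map_smul, smul_comm _ c, smul_finsum])

variable (m : ConformalProduct L)

theorem mulAt_eq_sum {a b : L} {N : ℕ} (hN : ∀ n, N ≤ n → m.coeff n a b = 0) (q : ℂ[X]) :
    m.mulAt q a b = ∑ n ∈ Finset.range N, q ^ n • m.coeff n a b := by
  refine finsum_eq_sum_of_support_subset _ fun n hn => ?_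
  by_contra hnN
  exact hn (by simp only [hN n (by simpa using hnN), smul_zero])

theorem mul_eq_mulAt (lam : ℂ) (a b : L) : m.mul lam a b = m.mulAt (C lam) a b :=
  finsum_congr fun n => by rw [← C_pow, C_smul_eq]

theorem cmul_eq_mulAt (lam : ℂ) (a b : L) : m.cmul lam a b = m.mulAt (-(X + C lam)) a b := rfl

theorem mul_smul_left (lam c : ℂ) (a b : L) : m.mul lam (c • a) b = c • m.mul lam a b := by
  simp [mul_eq_mulAt]

theorem mul_smul_right (lam c : ℂ) (a b : L) : m.mul lam a (c • b) = c • m.mul lam a b := by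
  simp [mul_eq_mulAt]

theorem cmul_smul_left (lam c : ℂ) (a b : L) : m.cmul lam (c • a) b = c • m.cmul lam a b := by
  simp [cmul_eq_mulAt]

theorem mulAt_mem_polyMaps (P : ℂ[X][X]) (a b : L) :
    (fun q => m.mulAt (P.eval q) a b) ∈ polyMaps L := by
  obtain ⟨N, hN⟩ := m.coeff_finite a b
  simpa [m.mulAt_eq_sum hN] using
    sum_mem_polyMaps (Finset.range N) fun n _ => eval_smul_mem_polyMaps (P ^ n) (m.coeff n a b)

variable {S : SuperModule L} {m}

theorem mulAt_X_smul_left (hm : IsLambdaProduct S m) (q : ℂ[X]) (a b : L) :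
    m.mulAt q ((X : ℂ[X]) • a) b = (-q) • m.mulAt q a b :=
  congrFun (eq_of_mem_polyMaps (Φ := fun q => m.mulAt q ((X : ℂ[X]) • a) b)
    (Ψ := fun q => (-q) • m.mulAt q a b)
    (by simpa only [eval_X] using m.mulAt_mem_polyMaps X ((X : ℂ[X]) • a) b)
    (by simpa only [eval_neg, eval_X] using
      eval_smul_mem_polyMaps_of_mem (-X) (m.mulAt_mem_polyMaps X a b))
    fun t => by simpa [mul_eq_mulAt, C_smul_eq] using hm.sesq_left t a b) q

theorem mulAt_X_smul_right (hm : IsLambdaProduct S m) (q : ℂ[X]) (a b : L) :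
    m.mulAt q a ((X : ℂ[X]) • b) = (X + q) • m.mulAt q a b :=
  congrFun (eq_of_mem_polyMaps (Φ := fun q => m.mulAt q a ((X : ℂ[X]) • b))
    (Ψ := fun q => (X + q) • m.mulAt q a b)
    (by simpa only [eval_X] using m.mulAt_mem_polyMaps X a ((X : ℂ[X]) • b))
    (by
      have := eval_smul_mem_polyMaps_of_mem (C X + X : ℂ[X][X]) (m.mulAt_mem_polyMaps X a b)
      simpa only [eval_add, eval_C, eval_X] using this)
    fun t => by simpa [mul_eq_mulAt, C_smul_eq, add_smul] using hm.sesq_right t a b) q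

theorem mulAt_smul_left (hm : IsLambdaProduct S m) (p q : ℂ[X]) (a b : L) :
    m.mulAt q (p • a) b = aeval (-q) p • m.mulAt q a b := by
  induction p using Polynomial.induction_on generalizing a with
  | C c => simp [C_smul_eq]
  | add p p' hp hp' => simp [add_smul, hp, hp']
  | monomial n c ih =>
    rw [pow_succ, ← mul_assoc, mul_smul, ih, mulAt_X_smul_left hm, smul_smul]
    simp

theorem mulAt_smul_right (hm : IsLambdaProduct S m) (p q : ℂ[X]) (a b : L) :
    m.mulAt q a (p • b) = aeval (X + q) p • m.mulAt q a b := by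
  induction p using Polynomial.induction_on generalizing b with
  | C c => simp [C_smul_eq]
  | add p p' hp hp' => simp [add_smul, hp, hp']
  | monomial n c ih =>
    rw [pow_succ, ← mul_assoc, mul_smul, ih, mulAt_X_smul_right hm, smul_smul]
    simp

theorem mulAt_mulAt_left (hm : IsLambdaProduct S m) (m' : ConformalProduct L) {a b : L} {N : ℕ}
    (hN : ∀ n, N ≤ n → m'.coeff n a b = 0) (P Q : ℂ[X]) (c : L) :
    m.mulAt P (m'.mulAt Q a b) c =
      ∑ n ∈ Finset.range N, aeval (-P) Q ^ n • m.mulAt P (m'.coeff n a b) c := by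
  simp [m'.mulAt_eq_sum hN, mulAt_smul_left hm]

theorem mulAt_mulAt_right (hm : IsLambdaProduct S m) (m' : ConformalProduct L) {a c : L} {N : ℕ}
    (hN : ∀ n, N ≤ n → m'.coeff n a c = 0) (P Q : ℂ[X]) (b : L) :
    m.mulAt P b (m'.mulAt Q a c) =
      ∑ n ∈ Finset.range N, aeval (X + P) Q ^ n • m.mulAt P b (m'.coeff n a c) := by
  simp [m'.mulAt_eq_sum hN, mulAt_smul_right hm]

/-- Inside an outer product at `λ + μ` the inner `∂` acts as `-λ-μ`, so `-∂-μ` becomes `λ`. -/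
theorem mul_cmul_left (hm : IsLambdaProduct S m) (m' : ConformalProduct L) (lam mu : ℂ)
    (a b c : L) : m.mul (lam + mu) (m'.cmul mu a b) c = m.mul (lam + mu) (m'.mul lam a b) c := by
  obtain ⟨N, hN⟩ := m'.coeff_finite a b
  simp only [mul_eq_mulAt, cmul_eq_mulAt, mulAt_mulAt_left hm m' hN]
  congr! 3
  simp

end ConformalProduct

theorem sgn_mul_self (i j : ZMod 2) : sgn i j * sgn i j = 1 := by
  rw [sgn, ← pow_add, Even.neg_one_pow ⟨_, rfl⟩]

theorem sgn_comm (i j : ZMod 2) : sgn i j = sgn j i := by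
  rw [sgn, sgn, mul_comm]

theorem sgn_add_left (i j k : ZMod 2) : sgn (i + j) k = sgn i k * sgn j k := by
  have hval : ∀ i j k : ZMod 2, (i + j).val * k.val % 2 = (i.val * k.val + j.val * k.val) % 2 := by
    decide
  rw [sgn, sgn, sgn, ← pow_add, neg_one_pow_eq_pow_mod_two, hval, ← neg_one_pow_eq_pow_mod_two]

theorem sgn_add_right (i j k : ZMod 2) : sgn i (j + k) = sgn i j * sgn i k := by
  rw [sgn_comm, sgn_add_left, sgn_comm j, sgn_comm k]

section Axioms

variable {L : Type*} [AddCommGroup L] [Module ℂ L] [Module ℂ[X] L]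
  {S : SuperModule L} {m br : ConformalProduct L} {i j : ZMod 2} {a b : L}

theorem IsLambdaProduct.mul_mem (hm : IsLambdaProduct S m) (ha : a ∈ S.grade i)
    (hb : b ∈ S.grade j) (lam : ℂ) : m.mul lam a b ∈ S.grade (i + j) :=
  finsum_induction (· ∈ S.grade (i + j)) (zero_mem _) (fun _ _ => add_mem)
    fun n => Submodule.smul_mem _ _ (hm.even i j a b ha hb n)

theorem IsCommAssoc.cmul_eq (hm : IsCommAssoc S m) (ha : a ∈ S.grade i) (hb : b ∈ S.grade j)
    (lam : ℂ) : m.cmul lam b a = sgn i j • m.mul lam a b := by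
  rw [hm.comm i j a b ha hb, smul_smul, sgn_mul_self, one_smul]

theorem IsLie.cmul_eq (hbr : IsLie S br) (ha : a ∈ S.grade i) (hb : b ∈ S.grade j) (lam : ℂ) :
    br.cmul lam b a = -(sgn i j • br.mul lam a b) := by
  rw [hbr.skew i j a b ha hb, smul_neg, neg_neg, smul_smul, sgn_mul_self, one_smul]

end Axioms

section Identities

variable {L : Type*} [AddCommGroup L] [Module ℂ L] [Module ℂ[X] L] [IsScalarTower ℂ ℂ[X] L]
  {S : SuperModule L} {m br : ConformalProduct L}

open ConformalProduct

theorem IsTPCSA.transposedLeibniz_cmul (hT : IsTPCSA S m br) {i j : ZMod 2} {a b : L}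
    (ha : a ∈ S.grade i) (hb : b ∈ S.grade j) (c : L) (t s : ℂ) :
    (2 : ℂ) • m.cmul t a (br.mul s b c) =
      br.cmul (t - s) (m.cmul s a b) c + sgn i j • br.mul s b (m.cmul (t - s) a c) := by
  have hbr := hT.lie.toIsLambdaProduct
  obtain ⟨J, hJ⟩ := m.coeff_finite a b
  obtain ⟨N, hN⟩ := m.coeff_finite a c
  -- the transposed Leibniz rule at `λ`, with both sides written as polynomials in `λ`
  have key : (fun q => (2 : ℂ) • m.mulAt q a (br.mul s b c)) = fun q =>
      ∑ n ∈ Finset.range J, q ^ n • br.mulAt (q + C s) (m.coeff n a b) c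
        + sgn i j • ∑ n ∈ Finset.range N, q ^ n • br.mul s b (m.coeff n a c) := by
    refine eq_of_mem_polyMaps ?_ ?_ fun lam => ?_
    · exact Submodule.smul_mem _ (2 : ℂ)
        (by simpa only [eval_X] using m.mulAt_mem_polyMaps X a (br.mul s b c))
    · refine add_mem (sum_mem_polyMaps _ fun n _ => ?_)
        (Submodule.smul_mem _ _ (sum_mem_polyMaps _ fun n _ => ?_))
      · have := eval_smul_mem_polyMaps_of_mem (X ^ n)
          (br.mulAt_mem_polyMaps (X + C (C s)) (m.coeff n a b) c)
        simpa only [eval_pow, eval_X, eval_add, eval_C] using this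
      · simpa only [eval_pow, eval_X] using
          eval_smul_mem_polyMaps (X ^ n) (br.mul s b (m.coeff n a c))
    · simp only [← mul_eq_mulAt, hT.transposedLeibniz i j a b ha hb c lam s]
      simp [mul_eq_mulAt, mulAt_mulAt_left hbr m hJ, mulAt_mulAt_right hbr m hN]
  have key_t := congrFun key (-(X + C t))
  simp only [← cmul_eq_mulAt] at key_t
  have hP : -(X + C t) + C s = -(X + C (t - s)) := by rw [C_sub]; ring
  have hl : aeval (-(-(X + C (t - s)))) (-(X + C s)) = -(X + C t) := by simp [C_sub]; ring
  have hr : aeval (X + C s) (-(X + C (t - s))) = -(X + C t) := by simp [C_sub]; ring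
  rw [key_t, cmul_eq_mulAt, cmul_eq_mulAt, cmul_eq_mulAt, mul_eq_mulAt br s b,
    mulAt_mulAt_left hbr m hJ, mulAt_mulAt_right hbr m hN, hP, hl, hr]
  simp only [← mul_eq_mulAt]

theorem IsTPCSA.bracket_mul_eq (hT : IsTPCSA S m br) {i j k : ZMod 2} {a b c : L}
    (ha : a ∈ S.grade i) (hb : b ∈ S.grade j) (hc : c ∈ S.grade k) (lam mu : ℂ) :
    m.mul (lam + mu) (br.mul lam a b) c =
      sgn i j • m.mul mu b (br.mul lam a c) - m.mul lam a (br.mul mu b c) := by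
  have hm := hT.commAssoc
  have hbr := hT.lie
  have hTab := hT.transposedLeibniz i j a b ha hb c lam mu
  have hTba := hT.transposedLeibniz j i b a hb ha c mu lam
  rw [hm.comm j i b a hb ha, mul_smul_left, add_comm mu, mul_cmul_left hbr.toIsLambdaProduct,
    sgn_comm j i] at hTba
  have hTca := hT.transposedLeibniz_cmul hc ha b (lam + mu) lam
  rw [add_sub_cancel_left, hm.cmul_eq ha hc, hm.cmul_eq hb hc, cmul_smul_left, mul_smul_right,
    hbr.cmul_eq hb (hm.mul_mem ha hc lam), sgn_comm k i] at hTca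
  have hcomm := hm.comm (i + j) k _ c (hbr.mul_mem ha hb lam) hc (lam + mu)
  linear_combination (norm := skip)
    hcomm + (sgn (i + j) k / 2) • hTca - (sgn i j / 2) • hTba + (1 / 2 : ℂ) • hTab
  match_scalars <;> grind [sgn_mul_self, sgn_add_left, sgn_add_right, sgn_comm]

theorem IsCommAssoc.mul_left_comm (hm : IsCommAssoc S m) {i j : ZMod 2} {a b : L}
    (ha : a ∈ S.grade i) (hb : b ∈ S.grade j) (c : L) (lam mu : ℂ) :
    m.mul lam a (m.mul mu b c) = sgn i j • m.mul mu b (m.mul lam a c) := by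
  rw [hm.assoc, hm.assoc, hm.comm i j a b ha hb, mul_smul_left, add_comm,
    mul_cmul_left hm.toIsLambdaProduct]

end Identities

/-- the identity (3.20) in a transposed Poisson conformal superalgebra. -/
theorem statement_6 (S : SuperModule L) (m br : ConformalProduct L)
    (hT : IsTPCSA S m br) (iu iv ix iy : ZMod 2) (u v x y : L)
    (hu : u ∈ S.grade iu) (hv : v ∈ S.grade iv) (hx : x ∈ S.grade ix) (hy : y ∈ S.grade iy)
    (lam mu gam : ℂ) :
    sgn iv ix • m.mul (mu - lam) x (br.mul lam u (m.mul gam v y))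
      + sgn iu iv • m.mul (gam + mu) (br.mul (gam + mu - lam) (m.mul gam v x) u) y
      - sgn iu ix • m.mul (lam + gam) (m.mul lam u v) (br.mul (mu - lam) x y) = 0 := by
  have hm := hT.commAssoc
  have hbr := hT.lie.toIsLambdaProduct
  rw [show gam + mu - lam = gam + (mu - lam) by ring,
    show gam + mu = gam + (mu - lam) + lam by ring]
  generalize mu - lam = nu
  have h_vx_u_y := hT.bracket_mul_eq (hm.mul_mem hv hx gam) hu hy (gam + nu) lam
  have h_x_u_vy := hT.bracket_mul_eq hx hu (hm.mul_mem hv hy gam) nu lam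
  have h_x_u_y := congrArg (m.mulAt (C gam) v) (hT.bracket_mul_eq hx hu hy nu lam)
  have h_v_x_y := congrArg (m.mulAt (C lam) u) (hT.transposedLeibniz iv ix v x hv hx y gam nu)
  simp only [map_sub, map_add, map_smul, ← ConformalProduct.mul_eq_mulAt] at h_x_u_y h_v_x_y
  have hcomm₁ := hm.mul_left_comm (hbr.mul_mem hx hu nu) hv y (nu + lam) gam
  have hcomm₂ := hm.mul_left_comm hv hu (br.mul nu x y) gam lam
  have hassoc₁ := hm.assoc gam nu v x (br.mul lam u y)
  have hassoc₂ := hm.assoc lam gam u v (br.mul nu x y)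
  linear_combination (norm := skip) sgn iv ix • h_x_u_vy + sgn iu iv • h_vx_u_y
    - sgn iu ix • h_v_x_y - sgn iv ix • hcomm₁ - sgn iu iv • h_x_u_y + sgn iu iv • hassoc₁
    - (sgn iu iv * sgn iu ix) • hcomm₂ + sgn iu ix • hassoc₂
  match_scalars <;> grind [sgn_mul_self, sgn_add_left, sgn_add_right, sgn_comm]

end TPCSAFormal
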